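/- arXiv:q-alg/9702029 — 6 statements merged into one kernel-verified Lean document; each statement's English description precedes it below -/
import Mathlib

section
/- Let $\sigma \in S_n$ and $\alpha = \varepsilon_i - \varepsilon_j$ ($i<j$) a positive root of $A_{n-1}$, with $\Lambda$ regular dominant (so all $(\sigma\Lambda,\beta)\ne 0$). Then the pair $(\lambda, \lambda^\alpha)$ is admissible (i.e. $d_\alpha(\lambda)=1$) if and only if one of the following holds: (i) $(\sigma\Lambda,\alpha)>0$ and for every decomposition $\alpha = \beta + \gamma$ into positive roots, $(\sigma\Lambda,\beta)<0$ or $(\sigma\Lambda,\gamma)<0$; (ii) $(\sigma\Lambda,\alpha)<0$ and for every decomposition $\alpha = \beta+\gamma$ into positive roots, both $(\sigma\Lambda,\beta)<0$ and $(\sigma\Lambda,\gamma)<0$. In particular $(\lambda,\lambda^{\alpha_k})$ is always admissible for a simple root $\alpha_k$. -/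
open scoped Classical

/-- Number of inversions of a permutation of `Fin n` (the Coxeter length in `S_n`). -/
def invCount {n : ℕ} (σ : Equiv.Perm (Fin n)) : ℕ :=
  (Finset.univ.filter (fun p : Fin n × Fin n => p.1 < p.2 ∧ σ p.2 < σ p.1)).card

lemma invCount_eq_sum {n : ℕ} (u : Equiv.Perm (Fin n)) :
    (invCount u : ℤ) = ∑ p : Fin n × Fin n, (if p.1 < p.2 ∧ u p.2 < u p.1 then (1:ℤ) else 0) := by
  rw [invCount, Finset.card_filter]
  push_cast
  rfl

set_option maxHeartbeats 1000000 in
lemma pointwise {n : ℕ} (i j : Fin n) (hij : i < j) (w : Fin n → Fin n) (x y : Fin n) :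
    (if w x < w y then ((if Equiv.swap i j y < Equiv.swap i j x then (1:ℤ) else 0)
        - (if y < x then (1:ℤ) else 0)) else 0)
  = (if x = i then (if i < y ∧ y ≤ j then (if w i < w y then (1:ℤ) else 0) else 0) else 0)
  - (if x = j then (if i ≤ y ∧ y < j then (if w j < w y then (1:ℤ) else 0) else 0) else 0)
  - (if y = i then (if i < x ∧ x < j then (if w x < w i then (1:ℤ) else 0) else 0) else 0)
  + (if y = j then (if i < x ∧ x < j then (if w x < w j then (1:ℤ) else 0) else 0) else 0) := by
  have hne : i ≠ j := ne_of_lt hij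
  by_cases hxi : x = i <;> by_cases hxj : x = j <;> by_cases hyi : y = i <;> by_cases hyj : y = j
  all_goals (try subst hxi) <;> (try subst hxj) <;> (try subst hyi) <;> (try subst hyj)
  all_goals simp only [Equiv.swap_apply_left, Equiv.swap_apply_right,
    Equiv.swap_apply_of_ne_of_ne, *, if_true, if_false, eq_self_iff_true, if_neg, if_pos,
    Ne, not_false_iff]
  all_goals (try (rw [Equiv.swap_apply_of_ne_of_ne hxi hxj]))
  all_goals (try (rw [Equiv.swap_apply_of_ne_of_ne hyi hyj]))
  all_goals split_ifs <;> subst_vars <;>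
    first
      | omega
      | (exfalso; simp only [Fin.lt_def, Fin.le_def, Fin.ext_iff, true_and, and_true, le_refl,
          not_true, not_lt, not_le, not_and] at * <;> omega)
      | (simp only [Fin.lt_def, Fin.le_def, Fin.ext_iff, true_and, and_true, le_refl,
          not_true, not_lt, not_le, not_and] at * <;> omega)
      | simp

lemma key {n : ℕ} (σ : Equiv.Perm (Fin n)) (i j : Fin n) (hij : i < j) :
    (invCount (Equiv.swap i j * σ) : ℤ) - (invCount σ : ℤ)
  = (if σ.symm i < σ.symm j then (1:ℤ) else 0) - (if σ.symm j < σ.symm i then (1:ℤ) else 0)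
    + ∑ y : Fin n, (if i < y ∧ y < j then
        ((if σ.symm i < σ.symm y then (1:ℤ) else 0) - (if σ.symm j < σ.symm y then (1:ℤ) else 0)
         - (if σ.symm y < σ.symm i then (1:ℤ) else 0) + (if σ.symm y < σ.symm j then (1:ℤ) else 0))
        else 0) := by
  have h1 : (invCount (Equiv.swap i j * σ) : ℤ)
      = ∑ x : Fin n, ∑ y : Fin n, (if σ.symm x < σ.symm y ∧ Equiv.swap i j y < Equiv.swap i j x
          then (1:ℤ) else 0) := by
    rw [invCount_eq_sum]
    rw [show (∑ x : Fin n, ∑ y : Fin n, (if σ.symm x < σ.symm y ∧ Equiv.swap i j y < Equiv.swap i j x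
            then (1:ℤ) else 0))
        = ∑ q : Fin n × Fin n, (if σ.symm q.1 < σ.symm q.2 ∧ Equiv.swap i j q.2 < Equiv.swap i j q.1
            then (1:ℤ) else 0) from (Fintype.sum_prod_type
              (fun q : Fin n × Fin n => (if σ.symm q.1 < σ.symm q.2 ∧
                Equiv.swap i j q.2 < Equiv.swap i j q.1 then (1:ℤ) else 0))).symm]
    exact (Fintype.sum_equiv (Equiv.prodCongr (σ.symm : Fin n ≃ Fin n) σ.symm) _ _
      (fun q => by simp [Equiv.Perm.mul_apply])).symm
  have h2 : (invCount σ : ℤ)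
      = ∑ x : Fin n, ∑ y : Fin n, (if σ.symm x < σ.symm y ∧ y < x then (1:ℤ) else 0) := by
    rw [invCount_eq_sum]
    rw [show (∑ x : Fin n, ∑ y : Fin n, (if σ.symm x < σ.symm y ∧ y < x then (1:ℤ) else 0))
        = ∑ q : Fin n × Fin n, (if σ.symm q.1 < σ.symm q.2 ∧ q.2 < q.1 then (1:ℤ) else 0)
          from (Fintype.sum_prod_type
            (fun q : Fin n × Fin n => (if σ.symm q.1 < σ.symm q.2 ∧ q.2 < q.1
              then (1:ℤ) else 0))).symm]
    exact (Fintype.sum_equiv (Equiv.prodCongr (σ.symm : Fin n ≃ Fin n) σ.symm) _ _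
      (fun q => by simp)).symm
  rw [h1, h2, ← Finset.sum_sub_distrib]
  have h3 : ∀ x : Fin n,
      (∑ y : Fin n, (if σ.symm x < σ.symm y ∧ Equiv.swap i j y < Equiv.swap i j x then (1:ℤ) else 0))
      - (∑ y : Fin n, (if σ.symm x < σ.symm y ∧ y < x then (1:ℤ) else 0))
    = ∑ y : Fin n,
       ((if x = i then (if i < y ∧ y ≤ j then (if σ.symm i < σ.symm y then (1:ℤ) else 0) else 0) else 0)
      - (if x = j then (if i ≤ y ∧ y < j then (if σ.symm j < σ.symm y then (1:ℤ) else 0) else 0) else 0)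
      - (if y = i then (if i < x ∧ x < j then (if σ.symm x < σ.symm i then (1:ℤ) else 0) else 0) else 0)
      + (if y = j then (if i < x ∧ x < j then (if σ.symm x < σ.symm j then (1:ℤ) else 0) else 0) else 0)) := by
    intro x
    rw [← Finset.sum_sub_distrib]
    refine Finset.sum_congr rfl fun y _ => ?_
    have h0 : (if σ.symm x < σ.symm y ∧ Equiv.swap i j y < Equiv.swap i j x then (1:ℤ) else 0)
        - (if σ.symm x < σ.symm y ∧ y < x then (1:ℤ) else 0)
      = (if σ.symm x < σ.symm y then
          ((if Equiv.swap i j y < Equiv.swap i j x then (1:ℤ) else 0)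
            - (if y < x then (1:ℤ) else 0)) else 0) := by
      by_cases h : σ.symm x < σ.symm y <;> simp [h]
    rw [h0]
    exact pointwise i j hij (fun z => σ.symm z) x y
  rw [Finset.sum_congr rfl (fun x _ => h3 x)]
  -- distribute the sums
  simp only [Finset.sum_add_distrib, Finset.sum_sub_distrib]
  rw [Finset.sum_comm (f := fun (x y : Fin n) =>
    (if x = i then (if i < y ∧ y ≤ j then (if σ.symm i < σ.symm y then (1:ℤ) else 0) else 0) else 0))]
  rw [Finset.sum_comm (f := fun (x y : Fin n) =>
    (if x = j then (if i ≤ y ∧ y < j then (if σ.symm j < σ.symm y then (1:ℤ) else 0) else 0) else 0))]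
  simp only [Finset.sum_ite_eq', Finset.mem_univ, if_true]
  -- now: S1 - S2 - S3 + S4 = RHS
  have E1 : (∑ y : Fin n, (if i < y ∧ y ≤ j then (if σ.symm i < σ.symm y then (1:ℤ) else 0) else 0))
      = (if σ.symm i < σ.symm j then (1:ℤ) else 0)
        + ∑ y : Fin n, (if i < y ∧ y < j then (if σ.symm i < σ.symm y then (1:ℤ) else 0) else 0) := by
    have hpt : ∀ y : Fin n, (if i < y ∧ y ≤ j then (if σ.symm i < σ.symm y then (1:ℤ) else 0) else 0)
        = (if y = j then (if σ.symm i < σ.symm j then (1:ℤ) else 0) else 0)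
          + (if i < y ∧ y < j then (if σ.symm i < σ.symm y then (1:ℤ) else 0) else 0) := by
      intro y
      by_cases hyj : y = j
      · subst hyj
        simp [hij, le_refl, lt_irrefl]
      · have hiff : (i < y ∧ y ≤ j) ↔ (i < y ∧ y < j) :=
          ⟨fun ⟨a, b⟩ => ⟨a, lt_of_le_of_ne b hyj⟩, fun ⟨a, b⟩ => ⟨a, le_of_lt b⟩⟩
        rw [if_neg hyj, if_congr hiff rfl rfl]
        ring
    rw [Finset.sum_congr rfl (fun y _ => hpt y), Finset.sum_add_distrib]
    simp [Finset.sum_ite_eq']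
  have E2 : (∑ y : Fin n, (if i ≤ y ∧ y < j then (if σ.symm j < σ.symm y then (1:ℤ) else 0) else 0))
      = (if σ.symm j < σ.symm i then (1:ℤ) else 0)
        + ∑ y : Fin n, (if i < y ∧ y < j then (if σ.symm j < σ.symm y then (1:ℤ) else 0) else 0) := by
    have hpt : ∀ y : Fin n, (if i ≤ y ∧ y < j then (if σ.symm j < σ.symm y then (1:ℤ) else 0) else 0)
        = (if y = i then (if σ.symm j < σ.symm i then (1:ℤ) else 0) else 0)
          + (if i < y ∧ y < j then (if σ.symm j < σ.symm y then (1:ℤ) else 0) else 0) := by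
      intro y
      by_cases hyi : y = i
      · subst hyi
        simp [hij, le_refl, lt_irrefl]
      · have hiff : (i ≤ y ∧ y < j) ↔ (i < y ∧ y < j) :=
          ⟨fun ⟨a, b⟩ => ⟨lt_of_le_of_ne a (Ne.symm hyi), b⟩, fun ⟨a, b⟩ => ⟨le_of_lt a, b⟩⟩
        rw [if_neg hyi, if_congr hiff rfl rfl]
        ring
    rw [Finset.sum_congr rfl (fun y _ => hpt y), Finset.sum_add_distrib]
    simp [Finset.sum_ite_eq']
  rw [E1, E2]
  have merge : ∀ (a b c d : Fin n → ℤ),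
      (∑ y : Fin n, (if i < y ∧ y < j then a y else 0))
      - (∑ y : Fin n, (if i < y ∧ y < j then b y else 0))
      - (∑ y : Fin n, (if i < y ∧ y < j then c y else 0))
      + (∑ y : Fin n, (if i < y ∧ y < j then d y else 0))
    = ∑ y : Fin n, (if i < y ∧ y < j then a y - b y - c y + d y else 0) := by
    intro a b c d
    rw [← Finset.sum_sub_distrib, ← Finset.sum_sub_distrib, ← Finset.sum_add_distrib]
    exact Finset.sum_congr rfl fun y _ => by by_cases h : i < y ∧ y < j <;> simp [h]
  have := merge (fun y => if σ.symm i < σ.symm y then (1:ℤ) else 0)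
    (fun y => if σ.symm j < σ.symm y then (1:ℤ) else 0)
    (fun y => if σ.symm y < σ.symm i then (1:ℤ) else 0)
    (fun y => if σ.symm y < σ.symm j then (1:ℤ) else 0)
  linarith [this]

lemma key_pos {n : ℕ} (σ : Equiv.Perm (Fin n)) (i j : Fin n) (hij : i < j)
    (h : σ.symm i < σ.symm j) :
    (invCount (Equiv.swap i j * σ) : ℤ) - (invCount σ : ℤ)
      = 1 + 2 * ((Finset.univ.filter (fun k : Fin n =>
          i < k ∧ k < j ∧ σ.symm i < σ.symm k ∧ σ.symm k < σ.symm j)).card : ℤ) := by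
  rw [key σ i j hij, if_pos h, if_neg (asymm h)]
  have hpt : ∀ y : Fin n,
      (if i < y ∧ y < j then
        ((if σ.symm i < σ.symm y then (1:ℤ) else 0) - (if σ.symm j < σ.symm y then (1:ℤ) else 0)
         - (if σ.symm y < σ.symm i then (1:ℤ) else 0) + (if σ.symm y < σ.symm j then (1:ℤ) else 0))
        else 0)
      = 2 * (if i < y ∧ y < j ∧ σ.symm i < σ.symm y ∧ σ.symm y < σ.symm j then (1:ℤ) else 0) := by
    intro y
    by_cases h1 : i < y
    · by_cases h2 : y < j
      · have hyi : y ≠ i := ne_of_gt h1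
        have hyj : y ≠ j := ne_of_lt h2
        have e1 : σ.symm y ≠ σ.symm i := fun hh => hyi (σ.symm.injective hh)
        have e2 : σ.symm y ≠ σ.symm j := fun hh => hyj (σ.symm.injective hh)
        have e1' : (σ.symm y : Fin n).val ≠ (σ.symm i).val := fun hh => e1 (Fin.ext hh)
        have e2' : (σ.symm y : Fin n).val ≠ (σ.symm j).val := fun hh => e2 (Fin.ext hh)
        have hh : (σ.symm i : Fin n).val < (σ.symm j).val := h
        rw [if_pos (⟨h1, h2⟩ : i < y ∧ y < j)]
        rw [if_congr (show (i < y ∧ y < j ∧ σ.symm i < σ.symm y ∧ σ.symm y < σ.symm j)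
            ↔ (σ.symm i < σ.symm y ∧ σ.symm y < σ.symm j) from by tauto) rfl rfl]
        rw [ite_and]
        split_ifs <;> simp only [Fin.lt_def] at * <;> omega
      · simp [h2]
    · simp [h1]
  rw [Finset.sum_congr rfl (fun y _ => hpt y), ← Finset.mul_sum]
  rw [show (∑ y : Fin n, (if i < y ∧ y < j ∧ σ.symm i < σ.symm y ∧ σ.symm y < σ.symm j
      then (1:ℤ) else 0))
    = ((Finset.univ.filter (fun k : Fin n =>
        i < k ∧ k < j ∧ σ.symm i < σ.symm k ∧ σ.symm k < σ.symm j)).card : ℤ) from by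
    rw [Finset.card_filter]; push_cast; rfl]
  ring

lemma key_neg {n : ℕ} (σ : Equiv.Perm (Fin n)) (i j : Fin n) (hij : i < j)
    (h : σ.symm j < σ.symm i) :
    (invCount (Equiv.swap i j * σ) : ℤ) - (invCount σ : ℤ)
      = -1 - 2 * ((Finset.univ.filter (fun k : Fin n =>
          i < k ∧ k < j ∧ σ.symm j < σ.symm k ∧ σ.symm k < σ.symm i)).card : ℤ) := by
  rw [key σ i j hij, if_pos h, if_neg (asymm h)]
  have hpt : ∀ y : Fin n,
      (if i < y ∧ y < j then
        ((if σ.symm i < σ.symm y then (1:ℤ) else 0) - (if σ.symm j < σ.symm y then (1:ℤ) else 0)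
         - (if σ.symm y < σ.symm i then (1:ℤ) else 0) + (if σ.symm y < σ.symm j then (1:ℤ) else 0))
        else 0)
      = -2 * (if i < y ∧ y < j ∧ σ.symm j < σ.symm y ∧ σ.symm y < σ.symm i then (1:ℤ) else 0) := by
    intro y
    by_cases h1 : i < y
    · by_cases h2 : y < j
      · have hyi : y ≠ i := ne_of_gt h1
        have hyj : y ≠ j := ne_of_lt h2
        have e1 : σ.symm y ≠ σ.symm i := fun hh => hyi (σ.symm.injective hh)
        have e2 : σ.symm y ≠ σ.symm j := fun hh => hyj (σ.symm.injective hh)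
        have e1' : (σ.symm y : Fin n).val ≠ (σ.symm i).val := fun hh => e1 (Fin.ext hh)
        have e2' : (σ.symm y : Fin n).val ≠ (σ.symm j).val := fun hh => e2 (Fin.ext hh)
        have hh : (σ.symm j : Fin n).val < (σ.symm i).val := h
        rw [if_pos (⟨h1, h2⟩ : i < y ∧ y < j)]
        rw [if_congr (show (i < y ∧ y < j ∧ σ.symm j < σ.symm y ∧ σ.symm y < σ.symm i)
            ↔ (σ.symm j < σ.symm y ∧ σ.symm y < σ.symm i) from by tauto) rfl rfl]
        rw [ite_and]
        split_ifs <;> simp only [Fin.lt_def] at * <;> omega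
      · simp [h2]
    · simp [h1]
  rw [Finset.sum_congr rfl (fun y _ => hpt y), ← Finset.mul_sum]
  rw [show (∑ y : Fin n, (if i < y ∧ y < j ∧ σ.symm j < σ.symm y ∧ σ.symm y < σ.symm i
      then (1:ℤ) else 0))
    = ((Finset.univ.filter (fun k : Fin n =>
        i < k ∧ k < j ∧ σ.symm j < σ.symm k ∧ σ.symm k < σ.symm i)).card : ℤ) from by
    rw [Finset.card_filter]; push_cast; rfl]
  ring


/-- The degree increment `d_α(λ)` for `λ = t_γ σ Λ` and the positive root
`α = ε_i - ε_j` (`i < j`): it equals `ℓ(r_α σ) - ℓ(σ)` if `(σΛ, α) > 0`, and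
`ℓ(r_α σ) - ℓ(σ) + 2|α|` if `(σΛ, α) < 0`, where `|α| = j - i` and
`(σΛ, ε_i - ε_j) = Λ(σ⁻¹ i) - Λ(σ⁻¹ j)`. -/
noncomputable def dval {n : ℕ} (Λ : Fin n → ℝ) (σ : Equiv.Perm (Fin n)) (i j : Fin n) : ℤ :=
  if Λ (σ.symm j) < Λ (σ.symm i) then
    (invCount (Equiv.swap i j * σ) : ℤ) - (invCount σ : ℤ)
  else
    (invCount (Equiv.swap i j * σ) : ℤ) - (invCount σ : ℤ) + 2 * ((j : ℤ) - (i : ℤ))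


/-- Admissibility criterion.  For a strictly dominant `Λ`, `σ ∈ S_n`, and
a positive root `α = ε_i - ε_j` (`i < j`), the pair `(λ, λ^α)` is admissible, i.e.
`d_α(λ) = 1`, iff either
(i) `(σΛ, α) > 0` and for every decomposition `α = (ε_i - ε_k) + (ε_k - ε_j)`
(`i < k < j`) one of `(σΛ, ε_i - ε_k) < 0`, `(σΛ, ε_k - ε_j) < 0` holds, or
(ii) `(σΛ, α) < 0` and for every such decomposition both hold.
In particular `(λ, λ^α)` is always admissible when `α` is a simple root (`j = i + 1`). -/
theorem stmt5 (n : ℕ) (Λ : Fin n → ℝ)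
    (hΛ : ∀ a b : Fin n, a < b → Λ b < Λ a)
    (σ : Equiv.Perm (Fin n)) (i j : Fin n) (hij : i < j) :
    (dval Λ σ i j = 1 ↔
      ((Λ (σ.symm j) < Λ (σ.symm i) ∧
          ∀ k : Fin n, i < k → k < j →
            (Λ (σ.symm i) < Λ (σ.symm k) ∨ Λ (σ.symm k) < Λ (σ.symm j))) ∨
       (Λ (σ.symm i) < Λ (σ.symm j) ∧
          ∀ k : Fin n, i < k → k < j →
            (Λ (σ.symm i) < Λ (σ.symm k) ∧ Λ (σ.symm k) < Λ (σ.symm j))))) ∧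
    ((j : ℕ) = (i : ℕ) + 1 → dval Λ σ i j = 1) := by
  have hord : ∀ a b : Fin n, Λ a < Λ b ↔ b < a := by
    intro a b
    constructor
    · intro hab
      rcases lt_trichotomy b a with h' | h' | h'
      · exact h'
      · subst h'; exact absurd hab (lt_irrefl _)
      · exact absurd hab (asymm (hΛ a b h'))
    · exact fun h => hΛ b a h
  have hne : σ.symm i ≠ σ.symm j := fun hh => (ne_of_lt hij) (σ.symm.injective hh)
  have main : dval Λ σ i j = 1 ↔
      ((Λ (σ.symm j) < Λ (σ.symm i) ∧
          ∀ k : Fin n, i < k → k < j →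
            (Λ (σ.symm i) < Λ (σ.symm k) ∨ Λ (σ.symm k) < Λ (σ.symm j))) ∨
       (Λ (σ.symm i) < Λ (σ.symm j) ∧
          ∀ k : Fin n, i < k → k < j →
            (Λ (σ.symm i) < Λ (σ.symm k) ∧ Λ (σ.symm k) < Λ (σ.symm j)))) := by
    rcases lt_or_gt_of_ne hne with hpos | hneg
    · -- (σΛ, α) > 0 case
      have hΛij : Λ (σ.symm j) < Λ (σ.symm i) := (hord _ _).mpr hpos
      have hd : dval Λ σ i j = 1 + 2 * ((Finset.univ.filter (fun k : Fin n =>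
          i < k ∧ k < j ∧ σ.symm i < σ.symm k ∧ σ.symm k < σ.symm j)).card : ℤ) := by
        unfold dval
        rw [if_pos hΛij]
        exact key_pos σ i j hij hpos
      constructor
      · intro h1
        left
        refine ⟨hΛij, ?_⟩
        have hc : ((Finset.univ.filter (fun k : Fin n =>
            i < k ∧ k < j ∧ σ.symm i < σ.symm k ∧ σ.symm k < σ.symm j)).card : ℤ) = 0 := by
          omega
        have hfe : (Finset.univ.filter (fun k : Fin n =>
            i < k ∧ k < j ∧ σ.symm i < σ.symm k ∧ σ.symm k < σ.symm j)) = ∅ :=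
          Finset.card_eq_zero.mp (by exact_mod_cast hc)
        intro k hik hkj
        by_cases hk : σ.symm k < σ.symm i
        · exact Or.inl ((hord _ _).mpr hk)
        · right
          have hki : σ.symm i < σ.symm k :=
            lt_of_le_of_ne (not_lt.mp hk)
              (fun hh => (ne_of_gt hik) (σ.symm.injective hh.symm))
          have hnotmem : ¬(i < k ∧ k < j ∧ σ.symm i < σ.symm k ∧ σ.symm k < σ.symm j) := by
            intro hmem
            have : k ∈ (Finset.univ.filter (fun k : Fin n =>
                i < k ∧ k < j ∧ σ.symm i < σ.symm k ∧ σ.symm k < σ.symm j)) :=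
              Finset.mem_filter.mpr ⟨Finset.mem_univ _, hmem⟩
            rw [hfe] at this
            exact absurd this (Finset.notMem_empty _)
          have hkj' : ¬ σ.symm k < σ.symm j := fun hh => hnotmem ⟨hik, hkj, hki, hh⟩
          have hjk : σ.symm j < σ.symm k :=
            lt_of_le_of_ne (not_lt.mp hkj')
              (fun hh => (ne_of_lt hkj) (σ.symm.injective hh.symm))
          exact (hord _ _).mpr hjk
      · intro h1
        have hcases : ∀ k : Fin n, i < k → k < j →
            ¬(σ.symm i < σ.symm k ∧ σ.symm k < σ.symm j) := by
          rcases h1 with ⟨_, hall⟩ | ⟨hl, _⟩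
          · intro k hik hkj hcc
            rcases hall k hik hkj with hA | hA
            · exact absurd ((hord _ _).mp hA) (asymm hcc.1)
            · exact absurd ((hord _ _).mp hA) (asymm hcc.2)
          · exact fun k hik hkj hcc => absurd ((hord _ _).mp hl) (asymm hpos)
        have hfe : (Finset.univ.filter (fun k : Fin n =>
            i < k ∧ k < j ∧ σ.symm i < σ.symm k ∧ σ.symm k < σ.symm j)) = ∅ :=
          Finset.filter_eq_empty_iff.mpr
            (fun k _ => fun hmem => hcases k hmem.1 hmem.2.1 ⟨hmem.2.2.1, hmem.2.2.2⟩)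
        rw [hd, hfe]
        simp
    · -- (σΛ, α) < 0 case
      have hΛji : Λ (σ.symm i) < Λ (σ.symm j) := (hord _ _).mpr hneg
      have hd : dval Λ σ i j = -1 - 2 * ((Finset.univ.filter (fun k : Fin n =>
          i < k ∧ k < j ∧ σ.symm j < σ.symm k ∧ σ.symm k < σ.symm i)).card : ℤ)
          + 2 * ((j : ℤ) - (i : ℤ)) := by
        unfold dval
        rw [if_neg (asymm hΛji)]
        rw [key_neg σ i j hij hneg]
      have hm : (Finset.univ.filter (fun k : Fin n => i < k ∧ k < j)).card
          = (j : ℕ) - (i : ℕ) - 1 := by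
        rw [show (Finset.univ.filter (fun k : Fin n => i < k ∧ k < j)) = Finset.Ioo i j from by
          ext k; simp [Finset.mem_Ioo]]
        exact Fin.card_Ioo i j
      have hsub : (Finset.univ.filter (fun k : Fin n =>
            i < k ∧ k < j ∧ σ.symm j < σ.symm k ∧ σ.symm k < σ.symm i))
          ⊆ (Finset.univ.filter (fun k : Fin n => i < k ∧ k < j)) := by
        intro x hx
        rw [Finset.mem_filter] at *
        exact ⟨hx.1, hx.2.1, hx.2.2.1⟩
      have hle : (Finset.univ.filter (fun k : Fin n =>
            i < k ∧ k < j ∧ σ.symm j < σ.symm k ∧ σ.symm k < σ.symm i)).card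
          ≤ (Finset.univ.filter (fun k : Fin n => i < k ∧ k < j)).card :=
        Finset.card_le_card hsub
      have hcast : ((j : Fin n) : ℤ) = ((j : ℕ) : ℤ) ∧ ((i : Fin n) : ℤ) = ((i : ℕ) : ℤ) := by
        constructor <;> rfl
      have hij' : (i : ℕ) < (j : ℕ) := hij
      have hiff2 : dval Λ σ i j = 1 ↔
          (Finset.univ.filter (fun k : Fin n =>
            i < k ∧ k < j ∧ σ.symm j < σ.symm k ∧ σ.symm k < σ.symm i)).card
          = (Finset.univ.filter (fun k : Fin n => i < k ∧ k < j)).card := by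
        rw [hd]
        constructor
        · intro h1
          have := hcast.1
          have := hcast.2
          omega
        · intro h1
          rw [h1, hm]
          have := hcast.1
          have := hcast.2
          push_cast
          omega
      rw [hiff2]
      constructor
      · intro h1
        right
        refine ⟨hΛji, ?_⟩
        have heq : (Finset.univ.filter (fun k : Fin n =>
              i < k ∧ k < j ∧ σ.symm j < σ.symm k ∧ σ.symm k < σ.symm i))
            = (Finset.univ.filter (fun k : Fin n => i < k ∧ k < j)) :=
          Finset.eq_of_subset_of_card_le hsub (le_of_eq h1.symm)
        intro k hik hkj
        have hk : k ∈ (Finset.univ.filter (fun k : Fin n => i < k ∧ k < j)) :=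
          Finset.mem_filter.mpr ⟨Finset.mem_univ _, hik, hkj⟩
        rw [← heq] at hk
        have hk2 := (Finset.mem_filter.mp hk).2
        exact ⟨(hord _ _).mpr hk2.2.2.2, (hord _ _).mpr hk2.2.2.1⟩
      · intro h1
        have hall : ∀ k : Fin n, i < k → k < j →
            (σ.symm j < σ.symm k ∧ σ.symm k < σ.symm i) := by
          rcases h1 with ⟨hl, _⟩ | ⟨_, hall⟩
          · exact fun k hik hkj => absurd ((hord _ _).mp hl) (asymm hneg)
          · intro k hik hkj
            rcases hall k hik hkj with ⟨hA, hB⟩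
            exact ⟨(hord _ _).mp hB, (hord _ _).mp hA⟩
        congr 1
        ext k
        simp only [Finset.mem_filter, Finset.mem_univ, true_and]
        constructor
        · exact fun h => ⟨h.1, h.2.1⟩
        · exact fun h => ⟨h.1, h.2, hall k h.1 h.2⟩
  refine ⟨main, fun hj1 => main.mpr ?_⟩
  have hvac : ∀ k : Fin n, i < k → k < j → False := by
    intro k hik hkj
    have h1 : (i : ℕ) < (k : ℕ) := hik
    have h2 : (k : ℕ) < (j : ℕ) := hkj
    omega
  rcases lt_or_gt_of_ne hne with hpos | hneg
  · exact Or.inl ⟨(hord _ _).mpr hpos, fun k hik hkj => absurd (hvac k hik hkj) not_false⟩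
  · exact Or.inr ⟨(hord _ _).mpr hneg, fun k hik hkj => absurd (hvac k hik hkj) not_false⟩
end

section
/- Let $\alpha,\beta$ be orthogonal positive roots of $A_{n-1}$ (so $(\alpha,\beta)=0$), and suppose $(\lambda, \lambda^\alpha, \lambda^{\alpha,\beta})$ is admissible, i.e. $d_\alpha(\lambda)=1$ and $d_\beta(\lambda^\alpha)=1$. Then $m_\beta(\lambda^\alpha) = m_\beta(\lambda)$, $\lambda^{\beta,\alpha} = \lambda^{\alpha,\beta}$, and $(\lambda, \lambda^\beta, \lambda^{\beta,\alpha})$ is also admissible: $d_\beta(\lambda) = 1$ and $d_\alpha(\lambda^\beta) = 1$. -/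
open scoped Classical

/-- The root `ε_i - ε_j` of `A_{n-1}`, as a vector in `ℝ^n`. -/
def rootv (n : ℕ) (i j : Fin n) : Fin n → ℝ :=
  fun t => (if t = i then 1 else 0) - (if t = j then 1 else 0)

/-- Standard inner product on `ℝ^n`. -/
def pairing {n : ℕ} (v w : Fin n → ℝ) : ℝ := ∑ t, v t * w t

/-- `isM r λ α m` says that `m = m_α(λ)`: the unique integer with `0 < m < r`
and `m ≡ (λ, α) mod r`. -/
def isM {n : ℕ} (r : ℤ) (lam : Fin n → ℝ) (al : Fin n → ℝ) (m : ℤ) : Prop :=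
  0 < m ∧ m < r ∧ ∃ c : ℤ, pairing lam al = (m : ℝ) + (r : ℝ) * (c : ℝ)

lemma swap_val {n : ℕ} (i j x : Fin n) :
    ((Equiv.swap i j x : Fin n) : ℕ) = if x = i then (j:ℕ) else if x = j then (i:ℕ) else (x:ℕ) := by
  rcases eq_or_ne x i with rfl | hxi
  · simp
  · rcases eq_or_ne x j with rfl | hxj
    · simp [hxi]
    · simp [Equiv.swap_apply_of_ne_of_ne hxi hxj, hxi, hxj]

lemma swap_adj_lt {n : ℕ} {i j : Fin n} (hj : (j:ℕ) = (i:ℕ)+1) (x y : Fin n) :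
    Equiv.swap i j x < Equiv.swap i j y ↔ ((x < y ∧ ¬(x = i ∧ y = j)) ∨ (y = i ∧ x = j)) := by
  simp only [Fin.lt_def, swap_val, Fin.ext_iff]
  split_ifs <;> omega

lemma invCount_swap_adj {n : ℕ} {i j : Fin n} (hij : i < j) (hj : (j:ℕ) = (i:ℕ)+1)
    (σ : Equiv.Perm (Fin n)) (h : σ.symm i < σ.symm j) :
    invCount (Equiv.swap i j * σ) = invCount σ + 1 := by
  have hsi : ∀ x : Fin n, σ x = i ↔ x = σ.symm i := fun x => σ.apply_eq_iff_eq_symm_apply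
  have hsj : ∀ x : Fin n, σ x = j ↔ x = σ.symm j := fun x => σ.apply_eq_iff_eq_symm_apply
  have hset : (Finset.univ.filter
      (fun p : Fin n × Fin n => p.1 < p.2 ∧ (Equiv.swap i j * σ) p.2 < (Equiv.swap i j * σ) p.1))
      = insert (σ.symm i, σ.symm j)
        (Finset.univ.filter (fun p : Fin n × Fin n => p.1 < p.2 ∧ σ p.2 < σ p.1)) := by
    ext ⟨p, q⟩
    simp only [Finset.mem_filter, Finset.mem_univ, true_and, Finset.mem_insert, Prod.mk.injEq,
      Equiv.Perm.mul_apply, swap_adj_lt hj, hsi, hsj]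
    constructor
    · rintro ⟨hpq, ⟨hlt, -⟩ | ⟨hq, hp⟩⟩
      · exact Or.inr ⟨hpq, hlt⟩
      · exact Or.inl ⟨hq, hp⟩
    · rintro (⟨rfl, rfl⟩ | ⟨hpq, hlt⟩)
      · exact ⟨h, Or.inr ⟨rfl, rfl⟩⟩
      · refine ⟨hpq, Or.inl ⟨hlt, ?_⟩⟩
        rintro ⟨rfl, rfl⟩
        exact absurd hpq (not_lt.2 h.le)
  have hnot : (σ.symm i, σ.symm j) ∉
      Finset.univ.filter (fun p : Fin n × Fin n => p.1 < p.2 ∧ σ p.2 < σ p.1) := by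
    simp only [Finset.mem_filter, Finset.mem_univ, true_and, not_and, Equiv.apply_symm_apply]
    intro _
    exact not_lt.2 hij.le
  unfold invCount
  rw [hset, Finset.card_insert_of_notMem hnot]

lemma invCount_swap_adj' {n : ℕ} {i j : Fin n} (hij : i < j) (hj : (j:ℕ) = (i:ℕ)+1)
    (σ : Equiv.Perm (Fin n)) (h : σ.symm j < σ.symm i) :
    invCount σ = invCount (Equiv.swap i j * σ) + 1 := by
  have hss : Equiv.swap i j * (Equiv.swap i j * σ) = σ := by
    rw [← mul_assoc, Equiv.swap_mul_self, one_mul]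
  have h2 : (Equiv.swap i j * σ).symm i < (Equiv.swap i j * σ).symm j := by
    have e1 : (Equiv.swap i j * σ).symm i = σ.symm j := by
      simp [Equiv.Perm.mul_def, Equiv.symm_trans_apply]
    have e2 : (Equiv.swap i j * σ).symm j = σ.symm i := by
      simp [Equiv.Perm.mul_def, Equiv.symm_trans_apply]
    rw [e1, e2]; exact h
  have := invCount_swap_adj hij hj (Equiv.swap i j * σ) h2
  rw [hss] at this
  omega

lemma key_lemma {n : ℕ} : ∀ (d : ℕ) (i j : Fin n) (σ : Equiv.Perm (Fin n)), i < j →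
    (j:ℕ) - (i:ℕ) = d → σ.symm i < σ.symm j →
    invCount σ < invCount (Equiv.swap i j * σ) ∧
    (invCount (Equiv.swap i j * σ) : ℤ) ≤ (invCount σ : ℤ) + 2*((j:ℕ) - (i:ℕ)) - 1 := by
  intro d
  induction d using Nat.strong_induction_on with
  | _ d ih =>
  intro i j σ hij hd h
  have hijn : (i:ℕ) < (j:ℕ) := hij
  by_cases hadj : (j:ℕ) = (i:ℕ) + 1
  · rw [invCount_swap_adj hij hadj σ h]
    omega
  · -- j - i ≥ 2
    have hjn : (i:ℕ) + 2 ≤ (j:ℕ) := by omega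
    set j' : Fin n := ⟨(j:ℕ) - 1, by omega⟩ with hj'
    have hj'v : (j':ℕ) = (j:ℕ) - 1 := rfl
    have hij' : i < j' := by
      simp only [Fin.lt_def, hj'v]; omega
    have hj'j : j' < j := by
      simp only [Fin.lt_def, hj'v]; omega
    have hadj' : (j:ℕ) = (j':ℕ) + 1 := by omega
    have hine : i ≠ j' := Fin.ne_of_lt hij'
    have hine2 : i ≠ j := Fin.ne_of_lt hij
    have hne3 : j' ≠ j := Fin.ne_of_lt hj'j
    have hdec : Equiv.swap i j = Equiv.swap j' j * Equiv.swap i j' * Equiv.swap j' j := by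
      rw [Equiv.swap_mul_swap_mul_swap hine hine2, Equiv.swap_comm]
    set σ1 := Equiv.swap j' j * σ with hσ1
    set σ2 := Equiv.swap i j' * σ1 with hσ2
    have hτ : Equiv.swap i j * σ = Equiv.swap j' j * σ2 := by
      rw [hdec, hσ2, hσ1]; group
    have hsymm1 : ∀ x : Fin n, σ1.symm x = σ.symm (Equiv.swap j' j x) := by
      intro x; simp [hσ1, Equiv.Perm.mul_def, Equiv.symm_trans_apply]
    have hsymm2 : ∀ x : Fin n, σ2.symm x = σ1.symm (Equiv.swap i j' x) := by
      intro x; simp [hσ2, Equiv.Perm.mul_def, Equiv.symm_trans_apply]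
    have e1i : σ1.symm i = σ.symm i := by
      rw [hsymm1, Equiv.swap_apply_of_ne_of_ne hine hine2]
    have e1j' : σ1.symm j' = σ.symm j := by rw [hsymm1, Equiv.swap_apply_left]
    have e1j : σ1.symm j = σ.symm j' := by rw [hsymm1, Equiv.swap_apply_right]
    have e2j' : σ2.symm j' = σ.symm i := by rw [hsymm2, Equiv.swap_apply_right, e1i]
    have e2j : σ2.symm j = σ.symm j' := by
      rw [hsymm2, Equiv.swap_apply_of_ne_of_ne (Ne.symm hine2) (Ne.symm hne3), e1j]
    -- middle step via induction hypothesis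
    have hmid : invCount σ1 < invCount σ2 ∧
        (invCount σ2 : ℤ) ≤ (invCount σ1 : ℤ) + 2*((j':ℕ) - (i:ℕ)) - 1 := by
      refine ih ((j':ℕ) - (i:ℕ)) (by omega) i j' σ1 hij' rfl ?_
      rw [e1i, e1j']
      exact h
    have hne4 : σ.symm j' ≠ σ.symm j := by
      intro hc; exact hne3 (σ.symm.injective hc)
    have hne5 : σ.symm i ≠ σ.symm j' := by
      intro hc; exact hine (σ.symm.injective hc)
    -- first step
    have hstep1 : (invCount σ1 : ℤ) = invCount σ + 1 ∨
        ((invCount σ : ℤ) = invCount σ1 + 1 ∧ σ.symm j < σ.symm j') := by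
      rcases lt_or_gt_of_ne hne4 with hlt | hgt
      · left
        have := invCount_swap_adj hj'j hadj' σ (by rwa [])
        rw [← hσ1] at this
        omega
      · right
        have := invCount_swap_adj' hj'j hadj' σ (by rwa [])
        rw [← hσ1] at this
        exact ⟨by omega, hgt⟩
    -- third step : swap j' j * σ2
    have hstep3 : ((invCount (Equiv.swap i j * σ) : ℤ) = invCount σ2 + 1 ∧ σ.symm i < σ.symm j') ∨
        ((invCount σ2 : ℤ) = invCount (Equiv.swap i j * σ) + 1 ∧ σ.symm j' < σ.symm i) := by
      rcases lt_or_gt_of_ne hne5 with hlt | hgt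
      · left
        have h3 : σ2.symm j' < σ2.symm j := by rw [e2j', e2j]; exact hlt
        have := invCount_swap_adj hj'j hadj' σ2 h3
        rw [← hτ] at this
        exact ⟨by omega, hlt⟩
      · right
        have h3 : σ2.symm j < σ2.symm j' := by rw [e2j', e2j]; exact hgt
        have := invCount_swap_adj' hj'j hadj' σ2 h3
        rw [← hτ] at this
        exact ⟨by omega, hgt⟩
    -- combine
    have htrich : σ.symm i < σ.symm j' ∨ (σ.symm j' < σ.symm i ∧ σ.symm j' < σ.symm j) := by
      rcases lt_or_gt_of_ne hne5 with hlt | hgt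
      · exact Or.inl hlt
      · exact Or.inr ⟨hgt, lt_trans hgt h⟩
    rcases hstep1 with h1 | ⟨h1, h1c⟩ <;> rcases hstep3 with ⟨h3, h3c⟩ | ⟨h3, h3c⟩ <;>
      rcases htrich with ht | ⟨ht1, ht2⟩ <;> omega

lemma dval_ge_one {n : ℕ} (Λ : Fin n → ℝ) (hΛ : ∀ a b : Fin n, a < b → Λ b < Λ a)
    (σ : Equiv.Perm (Fin n)) {i j : Fin n} (hij : i < j) : 1 ≤ dval Λ σ i j := by
  have hijn : (i:ℕ) < (j:ℕ) := hij
  have hne : σ.symm i ≠ σ.symm j := fun hc => Fin.ne_of_lt hij (σ.symm.injective hc)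
  unfold dval
  rcases lt_or_gt_of_ne hne with hlt | hgt
  · rw [if_pos (hΛ _ _ hlt)]
    have := (key_lemma ((j:ℕ)-(i:ℕ)) i j σ hij rfl hlt).1
    omega
  · rw [if_neg (not_lt.2 (le_of_lt (hΛ _ _ hgt)))]
    have e1 : (Equiv.swap i j * σ).symm i = σ.symm j := by
      simp [Equiv.Perm.mul_def, Equiv.symm_trans_apply]
    have e2 : (Equiv.swap i j * σ).symm j = σ.symm i := by
      simp [Equiv.Perm.mul_def, Equiv.symm_trans_apply]
    have h2 : (Equiv.swap i j * σ).symm i < (Equiv.swap i j * σ).symm j := by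
      rw [e1, e2]; exact hgt
    have := (key_lemma ((j:ℕ)-(i:ℕ)) i j (Equiv.swap i j * σ) hij rfl h2).2
    rw [show Equiv.swap i j * (Equiv.swap i j * σ) = σ by
      rw [← mul_assoc, Equiv.swap_mul_self, one_mul]] at this
    have hj' : ((j : Fin n) : ℤ) = ((j:ℕ) : ℤ) := rfl
    have hi' : ((i : Fin n) : ℤ) = ((i:ℕ) : ℤ) := rfl
    omega

lemma pairing_rootv {n : ℕ} (v : Fin n → ℝ) {i j : Fin n} (hij : i ≠ j) :
    pairing v (rootv n i j) = v i - v j := by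
  unfold pairing rootv
  simp [mul_sub, mul_ite, Finset.sum_sub_distrib, Finset.sum_ite_eq', hij]


/-- Commuting square for orthogonal roots.  Let `α = ε_i - ε_j`,
`β = ε_k - ε_l` be orthogonal positive roots (`(α,β) = 0`, i.e. `{i,j} ∩ {k,l} = ∅`),
`λ = σΛ + rγ` in the affine Weyl orbit, `m = m_α(λ)`, `m' = m_β(λ^α)`, and suppose
`(λ, λ^α, λ^{α,β})` is admissible (`d_α(λ) = 1` and `d_β(λ^α) = 1`).  Then
`m_β(λ) = m'` (so `m_β(λ^α) = m_β(λ)`), `λ^{β,α} = λ^{α,β}` (with `m_α(λ^β) = m`),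
and `(λ, λ^β, λ^{β,α})` is admissible: `d_β(λ) = 1` and `d_α(λ^β) = 1`. -/
theorem stmt6 (n : ℕ) (r : ℤ) (hr : (n : ℤ) + 2 ≤ r) (Λ : Fin n → ℝ)
    (hΛ : ∀ a b : Fin n, a < b → 0 < Λ a - Λ b ∧ Λ a - Λ b < (r : ℝ))
    (σ : Equiv.Perm (Fin n)) (γ : Fin n → ℤ) (hγ : (∑ t, γ t) = 0)
    (lam : Fin n → ℝ) (hlam : lam = fun t => Λ (σ.symm t) + (r : ℝ) * (γ t : ℝ))
    (i j k l : Fin n) (hij : i < j) (hkl : k < l)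
    (horth : i ≠ k ∧ i ≠ l ∧ j ≠ k ∧ j ≠ l)
    (m m' : ℤ)
    (hm : isM r lam (rootv n i j) m)
    (hm' : isM r (fun t => lam t - (m : ℝ) * rootv n i j t) (rootv n k l) m')
    (had1 : dval Λ σ i j = 1)
    (had2 : dval Λ (Equiv.swap i j * σ) k l = 1) :
    isM r lam (rootv n k l) m' ∧
    isM r (fun t => lam t - (m' : ℝ) * rootv n k l t) (rootv n i j) m ∧
    (fun t => lam t - (m' : ℝ) * rootv n k l t - (m : ℝ) * rootv n i j t) =
      (fun t => lam t - (m : ℝ) * rootv n i j t - (m' : ℝ) * rootv n k l t) ∧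
    dval Λ σ k l = 1 ∧
    dval Λ (Equiv.swap k l * σ) i j = 1 := by
  obtain ⟨hik, hil, hjk, hjl⟩ := horth
  have hijne : i ≠ j := Fin.ne_of_lt hij
  have hklne : k ≠ l := Fin.ne_of_lt hkl
  -- vanishing of cross coordinates
  have rik : rootv n i j k = 0 := by simp [rootv, Ne.symm hik, Ne.symm hjk]
  have ril : rootv n i j l = 0 := by simp [rootv, Ne.symm hil, Ne.symm hjl]
  have rki : rootv n k l i = 0 := by simp [rootv, hik, hil]
  have rkj : rootv n k l j = 0 := by simp [rootv, hjk, hjl]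
  -- isM transfers
  have hA : pairing (fun t => lam t - (m : ℝ) * rootv n i j t) (rootv n k l)
      = pairing lam (rootv n k l) := by
    rw [pairing_rootv _ hklne, pairing_rootv _ hklne]
    simp only [rik, ril]; ring
  have hB : pairing (fun t => lam t - (m' : ℝ) * rootv n k l t) (rootv n i j)
      = pairing lam (rootv n i j) := by
    rw [pairing_rootv _ hijne, pairing_rootv _ hijne]
    simp only [rki, rkj]; ring
  refine ⟨?_, ?_, ?_, ?_⟩
  · obtain ⟨h1, h2, c, hc⟩ := hm'
    exact ⟨h1, h2, c, by rw [← hA]; exact hc⟩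
  · obtain ⟨h1, h2, c, hc⟩ := hm
    exact ⟨h1, h2, c, by rw [hB]; exact hc⟩
  · funext t; ring
  · -- dval part
    have hΛ' : ∀ a b : Fin n, a < b → Λ b < Λ a := fun a b hab => by
      have := (hΛ a b hab).1; linarith
    -- conditions invariance
    have c1 : (Equiv.swap k l * σ).symm i = σ.symm i := by
      simp [Equiv.Perm.mul_def, Equiv.symm_trans_apply,
        Equiv.swap_apply_of_ne_of_ne hik hil]
    have c2 : (Equiv.swap k l * σ).symm j = σ.symm j := by
      simp [Equiv.Perm.mul_def, Equiv.symm_trans_apply,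
        Equiv.swap_apply_of_ne_of_ne hjk hjl]
    have c3 : (Equiv.swap i j * σ).symm k = σ.symm k := by
      simp [Equiv.Perm.mul_def, Equiv.symm_trans_apply,
        Equiv.swap_apply_of_ne_of_ne (Ne.symm hik) (Ne.symm hjk)]
    have c4 : (Equiv.swap i j * σ).symm l = σ.symm l := by
      simp [Equiv.Perm.mul_def, Equiv.symm_trans_apply,
        Equiv.swap_apply_of_ne_of_ne (Ne.symm hil) (Ne.symm hjl)]
    have hdisj : (Equiv.swap i j).Disjoint (Equiv.swap k l) := by
      intro x
      by_cases hx : x = i ∨ x = j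
      · right
        rcases hx with rfl | rfl
        · exact Equiv.swap_apply_of_ne_of_ne hik hil
        · exact Equiv.swap_apply_of_ne_of_ne hjk hjl
      · left
        push_neg at hx
        exact Equiv.swap_apply_of_ne_of_ne hx.1 hx.2
    have hcomm : Equiv.swap i j * (Equiv.swap k l * σ) = Equiv.swap k l * (Equiv.swap i j * σ) := by
      rw [← mul_assoc, hdisj.commute.eq, mul_assoc]
    have hsum : dval Λ σ k l + dval Λ (Equiv.swap k l * σ) i j
        = dval Λ σ i j + dval Λ (Equiv.swap i j * σ) k l := by
      unfold dval
      rw [c1, c2, c3, c4, hcomm]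
      split_ifs <;> ring
    have p1 : 1 ≤ dval Λ σ k l := dval_ge_one Λ hΛ' σ hkl
    have p2 : 1 ≤ dval Λ (Equiv.swap k l * σ) i j := dval_ge_one Λ hΛ' _ hij
    omega
end

section
/- Let $\alpha,\beta$ be positive roots of $A_{n-1}$ with $(\alpha,\beta) = -1$, set $m = m_\alpha(\lambda)$ and $m' = m_\beta(\lambda^\alpha)$, and suppose $(\lambda, \lambda^\alpha, \lambda^{\alpha,\beta})$ is admissible. Then $m \ne m'$, and: if $m > m'$, then $m_{\alpha+\beta}(\lambda) = m'$ and $m_\alpha(\lambda^{\alpha+\beta}) = m - m'$ (so $\lambda^{\alpha+\beta,\alpha} = \lambda^{\alpha,\beta}$); if $m < m'$, then $m_\beta(\lambda) = m' - m$ and $m_{\alpha+\beta}(\lambda^\beta) = m$ (so $\lambda^{\beta,\alpha+\beta} = \lambda^{\alpha,\beta}$). -/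
open scoped Classical

lemma pair_root {n : ℕ} (v : Fin n → ℝ) (c d : Fin n) :
    pairing v (rootv n c d) = v c - v d := by
  simp [pairing, rootv, mul_sub, Finset.sum_sub_distrib, mul_ite, mul_one, mul_zero]

lemma pairing_comm {n : ℕ} (v w : Fin n → ℝ) : pairing v w = pairing w v := by
  simp [pairing, mul_comm]

lemma pair_sub_smul {n : ℕ} (v w u : Fin n → ℝ) (a : ℝ) :
    pairing (fun t => v t - a * w t) u = pairing v u - a * pairing w u := by
  simp [pairing, sub_mul, Finset.sum_sub_distrib, Finset.mul_sum, mul_assoc]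

set_option maxHeartbeats 1000000 in
/-- Case `(α,β) = -1`.  Let `α = ε_i - ε_j`, `β = ε_k - ε_l` be positive
roots with `(α,β) = -1`, so `α + β = ε_p - ε_q` is again a positive root; let
`m = m_α(λ)`, `m' = m_β(λ^α)`, and suppose `(λ, λ^α, λ^{α,β})` is admissible.  Then
`m ≠ m'`, and: if `m > m'` then `m_{α+β}(λ) = m'` and `m_α(λ^{α+β}) = m - m'`
(so `λ^{α+β,α} = λ^{α,β}`); if `m < m'` then `m_β(λ) = m' - m` and
`m_{α+β}(λ^β) = m` (so `λ^{β,α+β} = λ^{α,β}`). -/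
theorem stmt7 (n : ℕ) (r : ℤ) (hr : (n : ℤ) + 2 ≤ r) (Λ : Fin n → ℝ)
    (hΛ : ∀ a b : Fin n, a < b → 0 < Λ a - Λ b ∧ Λ a - Λ b < (r : ℝ))
    (σ : Equiv.Perm (Fin n)) (γ : Fin n → ℤ) (hγ : (∑ t, γ t) = 0)
    (lam : Fin n → ℝ) (hlam : lam = fun t => Λ (σ.symm t) + (r : ℝ) * (γ t : ℝ))
    (i j k l p q : Fin n) (hij : i < j) (hkl : k < l) (hpq : p < q)
    (hpair : pairing (rootv n i j) (rootv n k l) = -1)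
    (hsum : (fun t => rootv n i j t + rootv n k l t) = rootv n p q)
    (m m' : ℤ)
    (hm : isM r lam (rootv n i j) m)
    (hm' : isM r (fun t => lam t - (m : ℝ) * rootv n i j t) (rootv n k l) m')
    (had1 : dval Λ σ i j = 1)
    (had2 : dval Λ (Equiv.swap i j * σ) k l = 1) :
    m ≠ m' ∧
    (m' < m →
      isM r lam (rootv n p q) m' ∧
      isM r (fun t => lam t - (m' : ℝ) * rootv n p q t) (rootv n i j) (m - m') ∧
      (fun t => lam t - (m' : ℝ) * rootv n p q t - ((m : ℝ) - (m' : ℝ)) * rootv n i j t) =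
        (fun t => lam t - (m : ℝ) * rootv n i j t - (m' : ℝ) * rootv n k l t)) ∧
    (m < m' →
      isM r lam (rootv n k l) (m' - m) ∧
      isM r (fun t => lam t - ((m' : ℝ) - (m : ℝ)) * rootv n k l t) (rootv n p q) m ∧
      (fun t => lam t - ((m' : ℝ) - (m : ℝ)) * rootv n k l t - (m : ℝ) * rootv n p q t) =
        (fun t => lam t - (m : ℝ) * rootv n i j t - (m' : ℝ) * rootv n k l t)) := by
  have hr0 : (0 : ℤ) < r := by omega
  have hrR : (0 : ℝ) < (r : ℝ) := by exact_mod_cast hr0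
  obtain ⟨hm0, hmr, c, hc⟩ := hm
  obtain ⟨hm'0, hm'r, c', hc'⟩ := hm'
  have hρ : ∀ t, rootv n p q t = rootv n i j t + rootv n k l t :=
    fun t => (congrFun hsum t).symm
  have haij : rootv n i j i - rootv n i j j = 2 := by
    norm_num [rootv, hij.ne, hij.ne']
  have hbkl : rootv n k l k - rootv n k l l = 2 := by
    norm_num [rootv, hkl.ne, hkl.ne']
  have hakl : rootv n i j k - rootv n i j l = -1 := by
    have := pair_root (rootv n i j) k l
    linarith [hpair]
  have hbij : rootv n k l i - rootv n k l j = -1 := by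
    have h1 := pair_root (rootv n k l) i j
    have h2 := pairing_comm (rootv n k l) (rootv n i j)
    linarith [hpair]
  have hc1 : lam i - lam j = (m : ℝ) + (r : ℝ) * (c : ℝ) := by
    rw [← pair_root]; exact hc
  have hakl' : pairing (rootv n i j) (rootv n k l) = -1 := hpair
  have hlamkl : pairing lam (rootv n k l) = ((m' : ℝ) - (m : ℝ)) + (r : ℝ) * (c' : ℝ) := by
    rw [pair_sub_smul, hakl'] at hc'
    linarith
  have hc2 : lam k - lam l = ((m' : ℝ) - (m : ℝ)) + (r : ℝ) * (c' : ℝ) := by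
    rw [← pair_root]; exact hlamkl
  have hlampq : pairing lam (rootv n p q)
      = pairing lam (rootv n i j) + pairing lam (rootv n k l) := by
    rw [← hsum]
    simp [pairing, mul_add, Finset.sum_add_distrib]
  have hcpq : lam p - lam q = (m' : ℝ) + (r : ℝ) * ((c + c' : ℤ) : ℝ) := by
    rw [← pair_root, hlampq, hc, hlamkl]
    push_cast
    ring
  have hρij : rootv n p q i - rootv n p q j = 1 := by
    rw [hρ i, hρ j]; linarith
  have hρklpq : rootv n k l p - rootv n k l q = 1 := by
    have e2 : pairing (rootv n i j) (rootv n p q)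
        = pairing (rootv n i j) (rootv n i j) + pairing (rootv n i j) (rootv n k l) := by
      rw [← hsum]
      simp [pairing, mul_add, Finset.sum_add_distrib]
    rw [pair_root, pair_root, hpair] at e2
    have e1 : rootv n i j p - rootv n i j q = 1 := by linarith [haij]
    have e3 : rootv n p q p - rootv n p q q = 2 := by
      norm_num [rootv, hpq.ne, hpq.ne']
    have h4 := hρ p; have h5 := hρ q
    linarith
  refine ⟨?_, ?_, ?_⟩
  · -- m ≠ m'
    intro hmm
    subst hmm
    have hk : lam k = Λ (σ.symm k) + (r : ℝ) * (γ k : ℝ) := by rw [hlam]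
    have hl : lam l = Λ (σ.symm l) + (r : ℝ) * (γ l : ℝ) := by rw [hlam]
    rw [hk, hl] at hc2
    set e : ℤ := c' - γ k + γ l with he
    have hE : Λ (σ.symm k) - Λ (σ.symm l) = (r : ℝ) * (e : ℝ) := by
      push_cast [he]
      linear_combination hc2
    have hne : σ.symm k ≠ σ.symm l := fun h => hkl.ne (σ.symm.injective h)
    rcases lt_or_gt_of_ne hne with h1 | h1
    · obtain ⟨h2, h3⟩ := hΛ _ _ h1
      rcases le_or_gt e 0 with h4 | h4
      · have h6 : ((e : ℤ) : ℝ) ≤ 0 := by exact_mod_cast h4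
        have h7 : (r : ℝ) * ((e : ℤ) : ℝ) ≤ 0 :=
          mul_nonpos_of_nonneg_of_nonpos hrR.le h6
        linarith
      · have h5 : (1 : ℤ) ≤ e := h4
        have h6 : (1 : ℝ) ≤ ((e : ℤ) : ℝ) := by exact_mod_cast h5
        have h7 : (r : ℝ) ≤ (r : ℝ) * ((e : ℤ) : ℝ) :=
          le_mul_of_one_le_right hrR.le h6
        linarith
    · obtain ⟨h2, h3⟩ := hΛ _ _ h1
      rcases le_or_gt 0 e with h4 | h4
      · have h6 : (0 : ℝ) ≤ ((e : ℤ) : ℝ) := by exact_mod_cast h4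
        have h7 : (0 : ℝ) ≤ (r : ℝ) * ((e : ℤ) : ℝ) := mul_nonneg hrR.le h6
        linarith
      · have h5 : e ≤ -1 := by omega
        have h6 : ((e : ℤ) : ℝ) ≤ -1 := by exact_mod_cast h5
        have h7 : (r : ℝ) * ((e : ℤ) : ℝ) ≤ (r : ℝ) * (-1) :=
          mul_le_mul_of_nonneg_left h6 hrR.le
        linarith
  · -- m' < m case
    intro hlt
    have hρα : pairing (rootv n p q) (rootv n i j) = 1 := by
      rw [pair_root]; exact hρij
    refine ⟨⟨hm'0, hm'r, c + c', ?_⟩, ⟨by omega, by omega, c, ?_⟩, ?_⟩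
    · rw [pair_root]; exact hcpq
    · rw [pair_sub_smul, hρα, hc]
      push_cast
      ring
    · funext t
      rw [hρ t]; ring
  · -- m < m' case
    intro hlt
    have hβρ : pairing (rootv n k l) (rootv n p q) = 1 := by
      rw [pair_root]; exact hρklpq
    refine ⟨⟨by omega, by omega, c', ?_⟩, ⟨hm0, hmr, c + c', ?_⟩, ?_⟩
    · rw [pair_root]; push_cast; exact hc2
    · rw [pair_sub_smul, hβρ, pair_root, hcpq]
      push_cast
      ring
    · funext t
      rw [hρ t]; ring
end

section
/- With $X_{12}(k) = -[k]_q X_1X_2 + [k+1]_q X_2X_1$ and assuming the $q$-Serre relations $X_1^2X_2 - (q+q^{-1})X_1X_2X_1 + X_2X_1^2 = 0$ and $X_2^2X_1 - (q+q^{-1})X_2X_1X_2 + X_1X_2^2 = 0$, the operators $X_{12}(k)$ pairwise commute: $[X_{12}(k), X_{12}(l)] = 0$ for all integers $k,l$. Moreover $X_{12}(-1) = X_1X_2$, $X_{12}(0) = X_2X_1$, and $X_2 X_{12}(k-1) = X_{12}(k) X_2$. -/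
/-- With `X₁₂(k) = -[k]_q X₁X₂ + [k+1]_q X₂X₁` and the two `q`-Serre
relations `X₁²X₂ - (q+q⁻¹) X₁X₂X₁ + X₂X₁² = 0` and
`X₂²X₁ - (q+q⁻¹) X₂X₁X₂ + X₁X₂² = 0`, the operators `X₁₂(k)` pairwise commute,
`X₁₂(-1) = X₁X₂`, `X₁₂(0) = X₂X₁`, and `X₂ X₁₂(k-1) = X₁₂(k) X₂`. -/
theorem stmt11 {K : Type*} [Field K] {A : Type*} [Ring A] [Algebra K A]
    (q : K) (hq : q ≠ 0) (hqq : q - q⁻¹ ≠ 0)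
    (qi : ℤ → K) (hqi : ∀ k : ℤ, qi k = (q ^ k - q ^ (-k)) / (q - q⁻¹))
    (X1 X2 : A)
    (X12 : ℤ → A)
    (hX12 : ∀ k : ℤ, X12 k = -(qi k) • (X1 * X2) + qi (k + 1) • (X2 * X1))
    (hserre1 : X1 ^ 2 * X2 - (q + q⁻¹) • (X1 * X2 * X1) + X2 * X1 ^ 2 = 0)
    (hserre2 : X2 ^ 2 * X1 - (q + q⁻¹) • (X2 * X1 * X2) + X1 * X2 ^ 2 = 0) :
    (∀ k l : ℤ, X12 k * X12 l = X12 l * X12 k) ∧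
    X12 (-1) = X1 * X2 ∧
    X12 0 = X2 * X1 ∧
    (∀ k : ℤ, X2 * X12 (k - 1) = X12 k * X2) := by
  -- rearranged Serre relations
  have h1' : X1 ^ 2 * X2 + X2 * X1 ^ 2 = (q + q⁻¹) • (X1 * X2 * X1) := by
    rw [sub_add_eq_add_sub, sub_eq_zero] at hserre1; exact hserre1
  have h2' : X2 ^ 2 * X1 + X1 * X2 ^ 2 = (q + q⁻¹) • (X2 * X1 * X2) := by
    rw [sub_add_eq_add_sub, sub_eq_zero] at hserre2; exact hserre2
  -- key consequence
  have e1 : X2 * (X1 ^ 2 * X2) + X2 * (X2 * X1 ^ 2)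
      = (q + q⁻¹) • (X2 * (X1 * X2 * X1)) := by
    rw [← mul_add, h1', mul_smul_comm]
  have e2 : X2 ^ 2 * X1 * X1 + X1 * X2 ^ 2 * X1
      = (q + q⁻¹) • (X2 * X1 * X2 * X1) := by
    rw [← add_mul, h2', smul_mul_assoc]
  have e3 : X2 * (X1 * X2 * X1) = X2 * X1 * X2 * X1 := by noncomm_ring
  have e4 : X2 * (X2 * X1 ^ 2) = X2 ^ 2 * X1 * X1 := by noncomm_ring
  have key : X2 * (X1 ^ 2 * X2) = X1 * X2 ^ 2 * X1 := by
    have h := e1.trans (by rw [e3])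
    rw [← e2, e4, add_comm (X2 ^ 2 * X1 * X1) (X1 * X2 ^ 2 * X1)] at h
    exact add_right_cancel h
  have hAB : (X1 * X2) * (X2 * X1) = (X2 * X1) * (X1 * X2) := by
    have l1 : (X1 * X2) * (X2 * X1) = X1 * X2 ^ 2 * X1 := by noncomm_ring
    have l2 : (X2 * X1) * (X1 * X2) = X2 * (X1 ^ 2 * X2) := by noncomm_ring
    rw [l1, l2, key]
  -- scalar identities
  have hqi0 : qi 0 = 0 := by rw [hqi]; simp
  have hqin1 : qi (-1) = -1 := by
    rw [hqi, div_eq_iff hqq]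
    simp only [zpow_neg, zpow_one, neg_neg]
    ring
  have hqi1 : qi 1 = 1 := by
    rw [hqi, div_eq_one_iff_eq hqq]
    simp [zpow_neg]
  have hs : ∀ m : ℤ, qi (m + 1) + qi (m - 1) = (q + q⁻¹) * qi m := by
    intro m
    rw [hqi, hqi, hqi]
    have h1 : q ^ (m + 1) = q ^ m * q := by rw [zpow_add₀ hq, zpow_one]
    have h2 : q ^ (-(m + 1)) = q ^ (-m) * q⁻¹ := by
      rw [zpow_neg, h1, mul_inv, zpow_neg]
    have h3 : q ^ (m - 1) = q ^ m * q⁻¹ := by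
      rw [zpow_sub₀ hq, zpow_one, div_eq_mul_inv]
    have h4 : q ^ (-(m - 1)) = q ^ (-m) * q := by
      rw [zpow_neg, h3, mul_inv, inv_inv, zpow_neg]
    rw [h1, h2, h3, h4, ← add_div, ← mul_div_assoc]
    congr 1
    ring
  refine ⟨?_, ?_, ?_, ?_⟩
  · -- commutation
    have comm : ∀ a b c d : K,
        (a • (X1 * X2) + b • (X2 * X1)) * (c • (X1 * X2) + d • (X2 * X1))
          = (c • (X1 * X2) + d • (X2 * X1)) * (a • (X1 * X2) + b • (X2 * X1)) := by
      intro a b c d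
      simp only [add_mul, mul_add, smul_mul_assoc, mul_smul_comm, smul_smul]
      rw [hAB]
      module
    intro k l
    rw [hX12 k, hX12 l]
    exact comm _ _ _ _
  · rw [hX12]
    norm_num [hqin1, hqi0]
  · rw [hX12]
    norm_num [hqi0, hqi1]
  · intro k
    have hk : k - 1 + 1 = k := by ring
    rw [hX12 (k - 1), hX12 k, hk]
    have e : qi k • (X2 ^ 2 * X1) + qi k • (X1 * X2 ^ 2)
        = (qi (k + 1) + qi (k - 1)) • (X2 * X1 * X2) := by
      rw [← smul_add, h2', smul_smul, hs k, mul_comm]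
    have a1 : X2 * (X1 * X2) = X2 * X1 * X2 := by noncomm_ring
    have a2 : X2 * (X2 * X1) = X2 ^ 2 * X1 := by noncomm_ring
    have a3 : (X1 * X2) * X2 = X1 * X2 ^ 2 := by noncomm_ring
    have a4 : (X2 * X1) * X2 = X2 * X1 * X2 := by noncomm_ring
    simp only [mul_add, add_mul, mul_smul_comm, smul_mul_assoc]
    rw [a1, a2, a3, a4]
    calc -qi (k - 1) • (X2 * X1 * X2) + qi k • (X2 ^ 2 * X1)
        = (qi k • (X2 ^ 2 * X1) + qi k • (X1 * X2 ^ 2))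
            - qi k • (X1 * X2 ^ 2) - qi (k - 1) • (X2 * X1 * X2) := by module
      _ = (qi (k + 1) + qi (k - 1)) • (X2 * X1 * X2)
            - qi k • (X1 * X2 ^ 2) - qi (k - 1) • (X2 * X1 * X2) := by rw [e]
      _ = -qi k • (X1 * X2 ^ 2) + qi (k + 1) • (X2 * X1 * X2) := by module
end

section
/- In an associative algebra generated by $X_1, X_2$ satisfying the two $q$-Serre relations, define nested brackets $X_{i\cdots i+m}(k_1,\dots,k_m) = \{\cdots\{\{X_i, X_{i+1}\}_{k_1}, X_{i+2}\}_{k_2},\dots, X_{i+m}\}_{k_m}$ where $\{A,B\}_k = -[k]_q AB + [k+1]_q BA$. For $n=3$ (so only $X_1, X_2$, $X_{12}(k) = \{X_1,X_2\}_k$), prove: $X_1 X_2 = X_{12}(-1)$, $X_2 X_1 = X_{12}(0)$, and for any non-negative integers $a, b$, setting $X_{12}^{(a)}(k) = \prod_{c=1}^{a} X_{12}(k - c + 1)$, the identity $X_1^{a+b} X_2^{b} = X_{12}^{(b)}(-a-1)\, X_1^{a}$ holds. -/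
/-- With `X₁₂(k) = {X₁,X₂}_k = -[k]_q X₁X₂ + [k+1]_q X₂X₁` and the two
`q`-Serre relations, one has `X₁X₂ = X₁₂(-1)`, `X₂X₁ = X₁₂(0)`, and for all
non-negative integers `a, b`, with `X₁₂^{(a)}(k) = ∏_{c=1}^{a} X₁₂(k-c+1)`,
the identity `X₁^{a+b} X₂^{b} = X₁₂^{(b)}(-a-1) X₁^{a}`. -/
theorem stmt17 {K : Type*} [Field K] {A : Type*} [Ring A] [Algebra K A]
    (q : K) (hq : q ≠ 0) (hqq : q - q⁻¹ ≠ 0)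
    (qi : ℤ → K) (hqi : ∀ k : ℤ, qi k = (q ^ k - q ^ (-k)) / (q - q⁻¹))
    (X1 X2 : A)
    (X12 : ℤ → A)
    (hX12 : ∀ k : ℤ, X12 k = -(qi k) • (X1 * X2) + qi (k + 1) • (X2 * X1))
    (X12p : ℕ → ℤ → A)
    (hX12p : ∀ (a : ℕ) (k : ℤ),
      X12p a k = ((List.range a).map (fun c => X12 (k - (c : ℤ)))).prod)
    (hserre1 : X1 ^ 2 * X2 - (q + q⁻¹) • (X1 * X2 * X1) + X2 * X1 ^ 2 = 0)
    (hserre2 : X2 ^ 2 * X1 - (q + q⁻¹) • (X2 * X1 * X2) + X1 * X2 ^ 2 = 0) :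
    X1 * X2 = X12 (-1) ∧
    X2 * X1 = X12 0 ∧
    (∀ a b : ℕ, X1 ^ (a + b) * X2 ^ b = X12p b (-(a : ℤ) - 1) * X1 ^ a) := by
  -- values of qi
  have hqi0 : qi 0 = 0 := by rw [hqi]; simp
  have hqi1 : qi 1 = 1 := by
    rw [hqi]; simp only [zpow_one, zpow_neg_one]; exact div_self hqq
  have hqim1 : qi (-1) = -1 := by
    rw [hqi]; simp only [zpow_neg_one, neg_neg, zpow_one]
    rw [div_eq_iff hqq]; ring
  -- recurrence for qi
  have hrec : ∀ k : ℤ, qi (k + 1) + qi (k - 1) = (q + q⁻¹) * qi k := by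
    intro k
    rw [hqi, hqi, hqi]
    have e1 : q ^ (k + 1) = q ^ k * q := by rw [zpow_add_one₀ hq]
    have e2 : q ^ (-(k + 1)) = q ^ (-k) * q⁻¹ := by
      rw [neg_add, zpow_add₀ hq, zpow_neg_one]
    have e3 : q ^ (k - 1) = q ^ k * q⁻¹ := by rw [zpow_sub_one₀ hq]
    have e4 : q ^ (-(k - 1)) = q ^ (-k) * q := by
      rw [neg_sub, sub_eq_add_neg, add_comm, zpow_add₀ hq, zpow_one, mul_comm]
    rw [e1, e2, e3, e4, ← add_div, ← mul_div_assoc]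
    congr 1; ring
  -- normalized form of hX12p
  have hX12p' : ∀ (a : ℕ) (k : ℤ),
      X12p a k = ((List.range a).map (fun c : ℕ => X12 (k - (c : ℤ)))).prod := by
    intro a k
    rw [hX12p]
    congr 1
    simp only [List.pure_def, List.bind_eq_flatMap]
    rw [← List.map_eq_flatMap, List.map_map]
    rfl
  -- rearranged Serre relations (right associated)
  have hA1 : X1 * (X1 * X2) = (q + q⁻¹) • (X1 * (X2 * X1)) - X2 * (X1 * X1) := by
    have h := hserre1
    simp only [pow_two, mul_assoc] at h
    rw [eq_sub_iff_add_eq, ← sub_eq_zero, ← h]; abel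
  have hA2 : X2 * (X1 * X1) = (q + q⁻¹) • (X1 * (X2 * X1)) - X1 * (X1 * X2) := by
    rw [hA1]; abel
  have hB1 : X2 * (X2 * X1) = (q + q⁻¹) • (X2 * (X1 * X2)) - X1 * (X2 * X2) := by
    have h := hserre2
    simp only [pow_two, mul_assoc] at h
    rw [eq_sub_iff_add_eq, ← sub_eq_zero, ← h]; abel
  -- the crucial quartic identity
  have hC : X1 * (X2 * (X2 * X1)) = X2 * (X1 * (X1 * X2)) := by
    have e2 := congrArg (fun y => y * X2) hA1
    simp only [sub_mul, smul_mul_assoc, mul_assoc] at e2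
    rw [hB1]
    simp only [mul_sub, mul_smul_comm]
    rw [e2]; abel
  -- first two conjuncts
  have h01 : X1 * X2 = X12 (-1) := by
    rw [hX12]; norm_num [hqim1, hqi0]
  have h02 : X2 * X1 = X12 0 := by
    rw [hX12]; norm_num [hqi0, hqi1]
  -- X1 commutes past X12
  have hcomm1 : ∀ k : ℤ, X1 * X12 k = X12 (k - 1) * X1 := by
    intro k
    rw [hX12 k, hX12 (k - 1)]
    have hk : k - 1 + 1 = k := by ring
    rw [hk]
    simp only [neg_smul, mul_add, add_mul, mul_neg, neg_mul, mul_smul_comm,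
      smul_mul_assoc, mul_assoc]
    rw [hA2]
    match_scalars
    · ring
    · linear_combination hrec k
  -- X12's commute
  have hcomm2 : ∀ k l : ℤ, X12 k * X12 l = X12 l * X12 k := by
    intro k l
    rw [hX12 k, hX12 l]
    simp only [neg_smul, mul_add, add_mul, mul_neg, neg_mul, mul_smul_comm,
      smul_mul_assoc, mul_assoc, smul_smul]
    rw [hC]
    match_scalars <;> ring
  -- product lemmas
  have hP0 : ∀ k : ℤ, X12p 0 k = 1 := by intro k; simp [hX12p']
  have hP1 : ∀ (b : ℕ) (k : ℤ), X12p (b + 1) k = X12 k * X12p b (k - 1) := by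
    intro b k
    rw [hX12p', hX12p', List.range_succ_eq_map]
    simp only [List.map_cons, List.map_map, List.prod_cons, Nat.cast_zero, sub_zero]
    congr 1
    refine congrArg List.prod (List.map_congr_left fun c _ => ?_)
    simp only [Function.comp_apply]
    congr 1
    push_cast; ring
  have hP2 : ∀ (b : ℕ) (k : ℤ), X12p (b + 1) k = X12p b k * X12 (k - b) := by
    intro b k
    rw [hX12p', hX12p', List.range_succ, List.map_append, List.prod_append]
    simp
  -- X12 m commutes with X12p b k
  have hcommP : ∀ (b : ℕ) (k m : ℤ), X12p b k * X12 m = X12 m * X12p b k := by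
    intro b
    induction b with
    | zero => intro k m; simp [hP0]
    | succ b ih =>
      intro k m
      rw [hP2, mul_assoc, hcomm2, ← mul_assoc, ih, mul_assoc]
  -- base family: X1^(a+1) * X2 = X12 (-a-1) * X1^a
  have hpow : ∀ a : ℕ, X1 ^ (a + 1) * X2 = X12 (-(a : ℤ) - 1) * X1 ^ a := by
    intro a
    induction a with
    | zero => simpa using h01
    | succ a ih =>
      have : X1 ^ (a + 1 + 1) * X2 = X1 * (X1 ^ (a + 1) * X2) := by
        rw [← mul_assoc, ← pow_succ']
      rw [this, ih, ← mul_assoc, hcomm1, mul_assoc, ← pow_succ']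
      congr 2
      push_cast; ring
  refine ⟨h01, h02, ?_⟩
  intro a b
  induction b generalizing a with
  | zero => simp [hP0]
  | succ b ih =>
    have h1 : a + (b + 1) = (a + 1) + b := by omega
    rw [h1, pow_succ X2 b, ← mul_assoc, ih (a + 1), mul_assoc, hpow a, ← mul_assoc,
      hcommP, mul_assoc, ← mul_assoc (X12 (-(a : ℤ) - 1))]
    have hidx : (-(((a + 1 : ℕ)) : ℤ) - 1) = -(a : ℤ) - 1 - 1 := by push_cast; ring
    rw [hidx, ← hP1]
end

section
/- With $X_{12}^{(a)}(k) = \prod_{c=1}^a X_{12}(k-c+1)$ as above (products of commuting $X_{12}(k)$'s), and assuming the $q$-Serre relations for $X_1, X_2$, prove the remaining three exchange identities: $X_1^a X_2^{a+b} = X_2^b X_{12}^{(a)}(-b-1)$, $X_2^a X_1^{a+b} = X_1^b X_{12}^{(a)}(a+b-1)$, and $X_2^{a+b} X_1^b = X_{12}^{(b)}(a+b-1) X_2^a$ for all non-negative integers $a,b$. -/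
/-- With `X₁₂^{(a)}(k) = ∏_{c=1}^{a} X₁₂(k-c+1)` (a product of
commuting `X₁₂(k)`'s) and the `q`-Serre relations for `X₁, X₂`, the remaining three
exchange identities hold for all non-negative integers `a, b`:
`X₁^a X₂^{a+b} = X₂^b X₁₂^{(a)}(-b-1)`,
`X₂^a X₁^{a+b} = X₁^b X₁₂^{(a)}(a+b-1)`, and
`X₂^{a+b} X₁^b = X₁₂^{(b)}(a+b-1) X₂^a`. -/
theorem stmt18 {K : Type*} [Field K] {A : Type*} [Ring A] [Algebra K A]
    (q : K) (hq : q ≠ 0) (hqq : q - q⁻¹ ≠ 0)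
    (qi : ℤ → K) (hqi : ∀ k : ℤ, qi k = (q ^ k - q ^ (-k)) / (q - q⁻¹))
    (X1 X2 : A)
    (X12 : ℤ → A)
    (hX12 : ∀ k : ℤ, X12 k = -(qi k) • (X1 * X2) + qi (k + 1) • (X2 * X1))
    (X12p : ℕ → ℤ → A)
    (hX12p : ∀ (a : ℕ) (k : ℤ),
      X12p a k = ((List.range a).map (fun c => X12 (k - (c : ℤ)))).prod)
    (hserre1 : X1 ^ 2 * X2 - (q + q⁻¹) • (X1 * X2 * X1) + X2 * X1 ^ 2 = 0)
    (hserre2 : X2 ^ 2 * X1 - (q + q⁻¹) • (X2 * X1 * X2) + X1 * X2 ^ 2 = 0) :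
    (∀ a b : ℕ, X1 ^ a * X2 ^ (a + b) = X2 ^ b * X12p a (-(b : ℤ) - 1)) ∧
    (∀ a b : ℕ, X2 ^ a * X1 ^ (a + b) = X1 ^ b * X12p a ((a : ℤ) + (b : ℤ) - 1)) ∧
    (∀ a b : ℕ, X2 ^ (a + b) * X1 ^ b = X12p b ((a : ℤ) + (b : ℤ) - 1) * X2 ^ a) := by
  have hq' : q⁻¹ ≠ 0 := inv_ne_zero hq
  -- scalar lemmas
  have qi0 : qi 0 = 0 := by rw [hqi]; simp
  have qi1 : qi 1 = 1 := by rw [hqi]; simp [zpow_neg]; exact hqq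
  have qim1 : qi (-1) = -1 := by
    rw [hqi]; simp [zpow_neg]; rw [← neg_sub, neg_div]; rw [div_self hqq]
  have qik : ∀ k : ℤ, qi (k+1) + qi (k-1) = (q + q⁻¹) * qi k := by
    intro k
    rw [hqi, hqi, hqi]
    have h1 : (q:K) ^ k ≠ 0 := zpow_ne_zero k hq
    rw [← add_div, ← mul_div_assoc]
    congr 1
    simp only [neg_add, neg_sub, zpow_add₀ hq, zpow_sub₀ hq, zpow_neg, zpow_one]
    field_simp
    ring
  -- Serre relations, rearranged
  have hs1 : X1 * (X1 * X2) = (q + q⁻¹) • (X1 * (X2 * X1)) - X2 * (X1 * X1) := by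
    rw [eq_sub_iff_add_eq, ← sub_eq_zero, ← hserre1]
    simp only [sq, mul_assoc]
    abel
  have hs2' : X1 * (X2 * X2) = (q + q⁻¹) • (X2 * (X1 * X2)) - X2 * (X2 * X1) := by
    rw [eq_sub_iff_add_eq, ← sub_eq_zero, ← hserre2]
    simp only [sq, mul_assoc]
    abel
  have c12 : X1 * (X2 * (X2 * X1)) = X2 * (X1 * (X1 * X2)) := by
    have e1 : X1 * (X2 * (X2 * X1)) = (X1 * (X2 * X2)) * X1 := by
      simp only [mul_assoc]
    rw [e1, hs2', hs1]
    simp only [sub_mul, mul_sub, smul_mul_assoc, mul_smul_comm, mul_assoc]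
  -- basic exchange relations
  have h12m1 : X12 (-1) = X1 * X2 := by
    rw [hX12]; norm_num [qim1, qi0]
  have h120 : X12 0 = X2 * X1 := by
    rw [hX12]; norm_num [qi0, qi1]
  have r1 : ∀ k, X1 * X12 k = X12 (k-1) * X1 := by
    intro k
    rw [hX12 k, hX12 (k-1)]
    simp only [neg_smul, mul_add, add_mul, mul_neg, neg_mul, mul_smul_comm,
      smul_mul_assoc, mul_assoc]
    rw [hs1]
    match_scalars
    · linear_combination qik k
    · ring
  have r2 : ∀ k, X2 * X12 k = X12 (k+1) * X2 := by
    intro k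
    rw [hX12 k, hX12 (k+1)]
    simp only [neg_smul, mul_add, add_mul, mul_neg, neg_mul, mul_smul_comm,
      smul_mul_assoc, mul_assoc]
    rw [hs2']
    have e := qik (k+1)
    rw [show k+1-1 = k from by ring] at e
    match_scalars
    · linear_combination - e
    · ring
  have comm : ∀ k l, X12 k * X12 l = X12 l * X12 k := by
    intro k l
    rw [hX12 k, hX12 l]
    simp only [neg_smul, mul_add, add_mul, mul_neg, neg_mul, mul_smul_comm,
      smul_mul_assoc, smul_smul, mul_assoc]
    rw [c12]
    match_scalars <;> ring
  have r1' : ∀ k, X12 k * X1 = X1 * X12 (k+1) := by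
    intro k
    have h := (r1 (k+1)).symm
    rwa [add_sub_cancel_right] at h
  -- product lemmas
  have hsing : ∀ (l : List ℕ), (l.flatMap fun c => ([(c:ℤ)])) = l.map Nat.cast := by
    intro l
    induction l with
    | nil => rfl
    | cons x xs ih => simp [List.flatMap_cons, ih, ← List.map_eq_flatMap]
  have hX12p' : ∀ (a : ℕ) (k : ℤ),
      X12p a k = ((List.range a).map (fun c : ℕ => X12 (k - (c:ℤ)))).prod := by
    intro a k
    rw [hX12p]
    simp [hsing, List.map_map, Function.comp_def, ← List.map_eq_flatMap]
  have hp0 : ∀ k, X12p 0 k = 1 := by intro k; simp [hX12p']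
  have hsnoc : ∀ (a : ℕ) (k : ℤ), X12p (a+1) k = X12p a k * X12 (k - a) := by
    intro a k
    rw [hX12p', hX12p']
    rw [show a + 1 = Nat.succ a from rfl, List.range_succ, List.map_append, List.prod_append]
    simp
  have hcons : ∀ (a : ℕ) (k : ℤ), X12p (a+1) k = X12 k * X12p a (k-1) := by
    intro a k
    rw [hX12p', hX12p', List.range_succ_eq_map, List.map_cons, List.prod_cons, List.map_map]
    simp only [Nat.cast_zero, sub_zero]
    have : ((fun c : ℕ => X12 (k - (c:ℤ))) ∘ Nat.succ) = fun c : ℕ => X12 (k - 1 - (c:ℤ)) := by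
      funext c
      simp only [Function.comp_apply]
      congr 1
      push_cast
      ring
    rw [this]
  have pcomm : ∀ (j : ℤ) (a : ℕ) (k : ℤ), X12 j * X12p a k = X12p a k * X12 j := by
    intro j a
    induction a with
    | zero => intro k; simp [hp0]
    | succ n ih =>
      intro k
      rw [hsnoc n k, ← mul_assoc, ih k, mul_assoc, comm j (k - n), ← mul_assoc]
  have pr1 : ∀ (a : ℕ) (k : ℤ), X1 * X12p a k = X12p a (k-1) * X1 := by
    intro a
    induction a with
    | zero => intro k; simp [hp0]
    | succ n ih =>
      intro k
      rw [hsnoc n k, ← mul_assoc, ih k, mul_assoc, r1 (k - n),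
        show k - (n:ℤ) - 1 = k - 1 - n from by ring, ← mul_assoc, ← hsnoc n (k-1)]
  have pr2 : ∀ (a : ℕ) (k : ℤ), X2 * X12p a k = X12p a (k+1) * X2 := by
    intro a
    induction a with
    | zero => intro k; simp [hp0]
    | succ n ih =>
      intro k
      rw [hsnoc n k, ← mul_assoc, ih k, mul_assoc, r2 (k - n),
        show k - (n:ℤ) + 1 = k + 1 - n from by ring, ← mul_assoc, ← hsnoc n (k+1)]
  have pr1' : ∀ (a : ℕ) (k : ℤ), X12p a k * X1 = X1 * X12p a (k+1) := by
    intro a k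
    have h := (pr1 a (k+1)).symm
    rwa [add_sub_cancel_right] at h
  have pr2' : ∀ (a : ℕ) (k : ℤ), X12p a k * X2 = X2 * X12p a (k-1) := by
    intro a k
    have h := (pr2 a (k-1)).symm
    rwa [sub_add_cancel] at h
  have p1 : ∀ (a : ℕ) (j : ℤ), X1^a * X12 j = X12 (j - a) * X1^a := by
    intro a
    induction a with
    | zero => intro j; simp
    | succ n ih =>
      intro j
      rw [pow_succ, mul_assoc, r1 j, ← mul_assoc, ih (j-1), mul_assoc, ← pow_succ,
        show j - 1 - (n:ℤ) = j - ((n+1 : ℕ) : ℤ) from by push_cast; ring]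
  have p2 : ∀ (a : ℕ) (j : ℤ), X2^a * X12 j = X12 (j + a) * X2^a := by
    intro a
    induction a with
    | zero => intro j; simp
    | succ n ih =>
      intro j
      rw [pow_succ, mul_assoc, r2 j, ← mul_assoc, ih (j+1), mul_assoc, ← pow_succ,
        show j + 1 + (n:ℤ) = j + ((n+1 : ℕ) : ℤ) from by push_cast; ring]
  -- base cases
  have I1b0 : ∀ a : ℕ, X1^a * X2^a = X12p a (-1) := by
    intro a
    induction a with
    | zero => simp [hp0]
    | succ n ih =>
      rw [pow_succ, pow_succ', show X1^n * X1 * (X2 * X2^n) = X1^n * (X1*X2) * X2^n from by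
          simp only [mul_assoc],
        ← h12m1, p1 n (-1), mul_assoc, ih, pcomm, ← hsnoc n (-1)]
  have I2b0 : ∀ a : ℕ, X2^a * X1^a = X12p a ((a:ℤ)-1) := by
    intro a
    induction a with
    | zero => simp [hp0]
    | succ n ih =>
      rw [pow_succ, pow_succ', show X2^n * X2 * (X1 * X1^n) = X2^n * (X2*X1) * X1^n from by
          simp only [mul_assoc],
        ← h120, p2 n 0, zero_add, mul_assoc, ih, ← hcons n (n:ℤ)]
      congr 2
      push_cast
      ring
  refine ⟨?_, ?_, ?_⟩
  · intro a b
    induction b with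
    | zero => simpa using I1b0 a
    | succ n ih =>
      rw [show a + (n+1) = (a+n)+1 from rfl, pow_succ, ← mul_assoc, ih, mul_assoc, pr2' a,
        ← mul_assoc, ← pow_succ]
      congr 2
      push_cast
      ring
  · intro a b
    induction b with
    | zero => simpa using I2b0 a
    | succ n ih =>
      rw [show a + (n+1) = (a+n)+1 from rfl, pow_succ, ← mul_assoc, ih, mul_assoc, pr1' a,
        ← mul_assoc, ← pow_succ]
      congr 2
      push_cast
      ring
  · intro a b
    induction a with
    | zero => simpa using I2b0 b
    | succ n ih =>
      rw [show n + 1 + b = (n+b)+1 from by omega, pow_succ', mul_assoc, ih, ← mul_assoc,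
        pr2 b, mul_assoc, ← pow_succ']
      congr 2
      push_cast
      ring
end
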